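/- arXiv:1710.11008 — 3 statements merged into one kernel-verified Lean document; each statement's English description precedes it below -/
import Mathlib

section
/- Two solutions Σ_t and Σ'_t of the scalar Riccati equation dΣ/dt = 2AΣ + σ_B² − C²Σ² with positive initial conditions satisfy |Σ_t − Σ'_t| ≤ β e^{−2λ₀ t} |Σ_0 − Σ'_0| for all t ≥ 0, where λ₀ = √(A² + σ_B²C²) and β = (2λ₀/(λ₀ − A))². -/
/-!
With `p = C² Σ − (A − λ₀)` the Riccati equation becomes the logistic equation
`p' = p (2λ₀ − p)`, and `1 / p` solves a linear equation:
`1 / p_t = 1 / (2λ₀) + (1 / p_0 − 1 / (2λ₀)) e^{−2λ₀ t}`.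
Subtracting this formula for two solutions `p`, `q` gives
`p_t − q_t = (p_t / p_0) (q_t / q_0) e^{−2λ₀ t} (p_0 − q_0)`,
and each ratio `p_t / p_0` is at most `2λ₀ / (λ₀ − A)` because `p_0 > λ₀ − A`.
-/

open Set Real

theorem eqOn_zero_of_hasDerivWithinAt_mul {f g : ℝ → ℝ} {a b : ℝ}
    (hf : ContinuousOn f (Icc a b)) (hg : ContinuousOn g (Icc a b))
    (hf' : ∀ x ∈ Ico a b, HasDerivWithinAt f (g x * f x) (Ici x) x) (ha : f a = 0) :
    EqOn f 0 (Icc a b) := by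
  obtain ⟨K, hK⟩ := isCompact_Icc.exists_bound_of_continuousOn hg
  refine eq_zero_of_abs_deriv_le_mul_abs_self_of_eq_zero_right (K := K) hf hf' ha fun x hx => ?_
  rw [norm_mul]
  exact mul_le_mul_of_nonneg_right (hK x (Ico_subset_Icc_self hx)) (norm_nonneg _)

section Logistic

variable {k : ℝ} {p : ℝ → ℝ}

/-- `1 / logisticRecip k x₀` solves the logistic equation `x' = x (k − x)` with `x 0 = x₀`. -/
noncomputable def logisticRecip (k x₀ t : ℝ) : ℝ := k⁻¹ + (x₀⁻¹ - k⁻¹) * exp (-(k * t))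

theorem hasDerivAt_logisticRecip (hk : k ≠ 0) (x₀ t : ℝ) :
    HasDerivAt (logisticRecip k x₀) (1 - k * logisticRecip k x₀ t) t := by
  have hlin : HasDerivAt (fun s => -(k * s)) (-k) t := by
    simpa using ((hasDerivAt_id' t).const_mul k).fun_neg
  refine ((hlin.exp.const_mul (x₀⁻¹ - k⁻¹)).const_add k⁻¹).congr_deriv ?_
  rw [logisticRecip, mul_add, mul_inv_cancel₀ hk]
  ring

theorem mul_logisticRecip_eq_one (hk : k ≠ 0) (hp0 : p 0 ≠ 0)
    (hp : ∀ t ≥ 0, HasDerivAt p (p t * (k - p t)) t) {t : ℝ} (ht : 0 ≤ t) :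
    p t * logisticRecip k (p 0) t = 1 := by
  have hcont : ContinuousOn p (Icc 0 t) :=
    fun s hs => (hp s hs.1).continuousAt.continuousWithinAt
  -- `p * logisticRecip − 1` solves the linear equation `y' = -p y` and vanishes at `0`.
  have hdefect : EqOn (fun s => p s * logisticRecip k (p 0) s - 1) 0 (Icc 0 t) := by
    refine eqOn_zero_of_hasDerivWithinAt_mul (g := fun s => -p s) ?_ hcont.neg ?_ ?_
    · exact (hcont.mul fun s _ =>
        (hasDerivAt_logisticRecip hk (p 0) s).continuousAt.continuousWithinAt).sub
        continuousOn_const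
    · intro s hs
      refine (((hp s hs.1).mul (hasDerivAt_logisticRecip hk (p 0) s)).sub_const 1
        ).hasDerivWithinAt.congr_deriv ?_
      field_simp
      ring
    · simp [logisticRecip, hp0]
  simpa [sub_eq_zero] using hdefect (right_mem_Icc.2 ht)

theorem div_le_mul_logisticRecip {m a t : ℝ} (hk : 0 < k) (hm : 0 < m) (hmk : m ≤ k)
    (hma : m ≤ a) (ht : 0 ≤ t) : m / k ≤ a * logisticRecip k a t := by
  have he : exp (-(k * t)) ≤ 1 := exp_le_one_iff.2 (neg_nonpos.2 (mul_nonneg hk.le ht))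
  have ha : a ≠ 0 := (hm.trans_le hma).ne'
  have hexpand : a * logisticRecip k a t = exp (-(k * t)) + a / k * (1 - exp (-(k * t))) := by
    simp only [logisticRecip]
    field_simp
    ring
  -- a convex combination of `1` and `a / k`, both at least `m / k`
  rw [hexpand]
  have hmk' : m / k ≤ 1 := (div_le_one hk).2 hmk
  have hak : m / k ≤ a / k := div_le_div_of_nonneg_right hma hk.le
  nlinarith [mul_nonneg (sub_nonneg.2 hmk') (exp_pos (-(k * t))).le,
    mul_nonneg (sub_nonneg.2 hak) (sub_nonneg.2 he)]

theorem logistic_div_mem_Ioc {m : ℝ} (hm : 0 < m) (hmk : m ≤ k) (hp0 : m ≤ p 0)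
    (hp : ∀ t ≥ 0, HasDerivAt p (p t * (k - p t)) t) {t : ℝ} (ht : 0 ≤ t) :
    p t / p 0 ∈ Ioc 0 (k / m) := by
  have hk : 0 < k := hm.trans_le hmk
  have hlow := div_le_mul_logisticRecip hk hm hmk hp0 ht
  have hpos : 0 < p 0 * logisticRecip k (p 0) t := (div_pos hm hk).trans_le hlow
  have hratio : p t / p 0 = (p 0 * logisticRecip k (p 0) t)⁻¹ := by
    have := mul_logisticRecip_eq_one hk.ne' (hm.trans_le hp0).ne' hp ht
    rw [mul_inv, ← eq_inv_of_mul_eq_one_left this, div_eq_inv_mul]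
  rw [hratio]
  refine ⟨inv_pos.2 hpos, ?_⟩
  calc (p 0 * logisticRecip k (p 0) t)⁻¹ ≤ (m / k)⁻¹ := inv_anti₀ (div_pos hm hk) hlow
    _ = k / m := inv_div m k

theorem logistic_contraction {q : ℝ → ℝ} {m : ℝ} (hm : 0 < m) (hmk : m ≤ k)
    (hp0 : m ≤ p 0) (hq0 : m ≤ q 0)
    (hp : ∀ t ≥ 0, HasDerivAt p (p t * (k - p t)) t)
    (hq : ∀ t ≥ 0, HasDerivAt q (q t * (k - q t)) t) {t : ℝ} (ht : 0 ≤ t) :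
    |p t - q t| ≤ (k / m) ^ 2 * exp (-(k * t)) * |p 0 - q 0| := by
  have hk : k ≠ 0 := (hm.trans_le hmk).ne'
  have hp0' : p 0 ≠ 0 := (hm.trans_le hp0).ne'
  have hq0' : q 0 ≠ 0 := (hm.trans_le hq0).ne'
  have hpY := mul_logisticRecip_eq_one hk hp0' hp ht
  have hqY := mul_logisticRecip_eq_one hk hq0' hq ht
  have hdiff : p t - q t = p t / p 0 * (q t / q 0) * exp (-(k * t)) * (p 0 - q 0) := by
    have hrecip : p t / p 0 * (q t / q 0) * exp (-(k * t)) * (p 0 - q 0) =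
        p t * q t * (logisticRecip k (q 0) t - logisticRecip k (p 0) t) := by
      simp only [logisticRecip]
      field_simp
      ring
    rw [hrecip]
    linear_combination (-p t) * hqY + q t * hpY
  obtain ⟨hp_pos, hp_le⟩ := logistic_div_mem_Ioc hm hmk hp0 hp ht
  obtain ⟨hq_pos, hq_le⟩ := logistic_div_mem_Ioc hm hmk hq0 hq ht
  have hkm : 0 ≤ k / m := hp_pos.le.trans hp_le
  rw [hdiff, abs_mul, abs_of_pos (by positivity), sq]
  gcongr

end Logistic

theorem hasDerivAt_riccati_sub_logistic {A C σB lam : ℝ} {Sig : ℝ → ℝ} {t : ℝ}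
    (hlam : lam ^ 2 = A ^ 2 + σB ^ 2 * C ^ 2)
    (h : HasDerivAt Sig (2 * A * Sig t + σB ^ 2 - C ^ 2 * Sig t ^ 2) t) :
    HasDerivAt (fun s => C ^ 2 * Sig s - (A - lam))
      ((C ^ 2 * Sig t - (A - lam)) * (2 * lam - (C ^ 2 * Sig t - (A - lam)))) t := by
  refine ((h.const_mul (C ^ 2)).sub_const (A - lam)).congr_deriv ?_
  linear_combination (-1) * hlam

/-- Two solutions of the scalar Riccati equation with positive initial conditions
contract exponentially: `|Σ_t − Σ'_t| ≤ β e^{−2λ₀ t} |Σ_0 − Σ'_0|`. -/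
theorem scalar_riccati_contraction
    (A C σB : ℝ) (hC : C ≠ 0) (hσ : σB ≠ 0)
    (lam0 β : ℝ)
    (hlam0 : lam0 = Real.sqrt (A ^ 2 + σB ^ 2 * C ^ 2))
    (hβ : β = (2 * lam0 / (lam0 - A)) ^ 2)
    (Sig Sig' : ℝ → ℝ)
    (hSig0 : Sig 0 > 0) (hSig'0 : Sig' 0 > 0)
    (hode : ∀ t ≥ (0:ℝ), HasDerivAt Sig (2 * A * Sig t + σB ^ 2 - C ^ 2 * (Sig t) ^ 2) t)
    (hode' : ∀ t ≥ (0:ℝ), HasDerivAt Sig' (2 * A * Sig' t + σB ^ 2 - C ^ 2 * (Sig' t) ^ 2) t) :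
    ∀ t ≥ (0:ℝ), |Sig t - Sig' t| ≤ β * Real.exp (-2 * lam0 * t) * |Sig 0 - Sig' 0| := by
  intro t ht
  have hC2 : 0 < C ^ 2 := by positivity
  have hlam_sq : lam0 ^ 2 = A ^ 2 + σB ^ 2 * C ^ 2 := hlam0 ▸ sq_sqrt (by positivity)
  have hA : |A| < lam0 := by
    rw [hlam0, ← sqrt_sq_eq_abs]
    exact sqrt_lt_sqrt (sq_nonneg A) (lt_add_of_pos_right _ (by positivity))
  obtain ⟨hAl, hAr⟩ := abs_lt.1 hA
  have key := logistic_contraction (k := 2 * lam0) (m := lam0 - A)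
    (p := fun s => C ^ 2 * Sig s - (A - lam0)) (q := fun s => C ^ 2 * Sig' s - (A - lam0))
    (by linarith) (by linarith)
    (by linarith [mul_pos hC2 hSig0]) (by linarith [mul_pos hC2 hSig'0])
    (fun s hs => hasDerivAt_riccati_sub_logistic hlam_sq (hode s hs))
    (fun s hs => hasDerivAt_riccati_sub_logistic hlam_sq (hode' s hs)) ht
  simp only [sub_sub_sub_cancel_right, ← mul_sub, abs_mul, abs_of_pos hC2] at key
  rw [hβ, show -2 * lam0 * t = -(2 * lam0 * t) by ring]
  exact le_of_mul_le_mul_left (by linarith) hC2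
end

section
/- The matrix Riccati solution Σ_t = Σ_∞ + e^{F_∞ t} D_t^{-1} e^{F_∞^⊤ t}, where D_t = (Σ_0 − Σ_∞)^{-1} + ∫_0^t e^{F_∞^⊤ s} C^⊤ C e^{F_∞ s} ds and F_∞ = A − Σ_∞ C^⊤ C, satisfies dΣ_t/dt = AΣ_t + Σ_t A^⊤ + σ_B σ_B^⊤ − Σ_t C^⊤ C Σ_t with initial value Σ_0. -/
/-!
Write `Σ_t = Σ_∞ + P_t` and `Q = CᵀC`. Because `Σ_∞` is a stationary point of the Riccati
equation, `P` has to solve the Riccati equation without constant term and with drift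
`F_∞ = A - Σ_∞ Q`: `Ṗ = F_∞ P + P F_∞ᵀ - P Q P`. The conjugate `P_t = e^{t F_∞} D_t⁻¹ e^{t F_∞ᵀ}`
does: the two exponentials produce the linear terms, and since `Ḋ_t = e^{t F_∞ᵀ} Q e^{t F_∞}`,
the derivative `-D⁻¹ Ḋ D⁻¹` of the inverse produces `-P Q P`. At `t = 0` the integral vanishes,
so `D_0⁻¹ = Σ_0 - Σ_∞`.
-/

section

open NormedSpace Ring

theorem HasDerivAt.ringInverse {𝕜 R : Type*} [NontriviallyNormedField 𝕜] [NormedRing R]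
    [HasSummableGeomSeries R] [NormedAlgebra 𝕜 R] {f : 𝕜 → R} {f' : R} {t : 𝕜}
    (hf : HasDerivAt f f' t) (ht : IsUnit (f t)) :
    HasDerivAt (fun s => (f s)⁻¹ʳ) (-((f t)⁻¹ʳ * f' * (f t)⁻¹ʳ)) t := by
  obtain ⟨u, hu⟩ := ht
  have hinv := hasFDerivAt_ringInverse (𝕜 := 𝕜) u
  rw [hu] at hinv
  have h := hinv.comp_hasDerivAt t hf
  rw [← Ring.inverse_unit, hu] at h
  exact h

theorem hasDerivAt_exp_mul_ringInverse_mul_exp {𝔸 : Type*} [NormedRing 𝔸] [NormedAlgebra ℝ 𝔸]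
    [CompleteSpace 𝔸] (F G Q : 𝔸) {D : ℝ → 𝔸} {t : ℝ}
    (hD : HasDerivAt D (exp (t • G) * Q * exp (t • F)) t) (ht : IsUnit (D t)) :
    HasDerivAt (fun s => exp (s • F) * (D s)⁻¹ʳ * exp (s • G))
      (F * (exp (t • F) * (D t)⁻¹ʳ * exp (t • G)) + exp (t • F) * (D t)⁻¹ʳ * exp (t • G) * G
        - exp (t • F) * (D t)⁻¹ʳ * exp (t • G) * Q * (exp (t • F) * (D t)⁻¹ʳ * exp (t • G))) t := by
  convert ((hasDerivAt_exp_smul_const' F t).fun_mul (hD.ringInverse ht)).fun_mul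
    (hasDerivAt_exp_smul_const G t) using 1
  noncomm_ring

theorem riccati_add_of_stationary {R : Type*} [Ring R] {A A' S Q W : R}
    (hS : A * S + S * A' + W - S * Q * S = 0) (P : R) :
    A * (S + P) + (S + P) * A' + W - (S + P) * Q * (S + P)
      = (A - S * Q) * P + P * (A' - Q * S) - P * Q * P := by
  rw [← sub_eq_zero, ← hS]
  noncomm_ring

/- `Matrix` carries no global normed-ring structure; the operator norm provides one, with the
same topology as the sup norm of the statement, so derivatives transfer definitionally. -/
section LinftyOp

attribute [local instance] Matrix.linftyOpNormedRing Matrix.linftyOpNormedAlgebra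

variable {n : Type*} [Fintype n] [DecidableEq n]

theorem Matrix.continuous_exp_smul (X : Matrix n n ℝ) : Continuous fun s : ℝ => exp (s • X) := by
  fun_prop

theorem Matrix.hasDerivAt_exp_mul_inv_mul_exp (F G Q : Matrix n n ℝ) {D : ℝ → Matrix n n ℝ}
    {t : ℝ} (hD : HasDerivAt D (exp (t • G) * Q * exp (t • F)) t) (ht : IsUnit (D t)) :
    HasDerivAt (fun s => exp (s • F) * (D s)⁻¹ * exp (s • G))
      (F * (exp (t • F) * (D t)⁻¹ * exp (t • G)) + exp (t • F) * (D t)⁻¹ * exp (t • G) * G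
        - exp (t • F) * (D t)⁻¹ * exp (t • G) * Q * (exp (t • F) * (D t)⁻¹ * exp (t • G))) t := by
  simp only [Matrix.nonsing_inv_eq_ringInverse]
  exact hasDerivAt_exp_mul_ringInverse_mul_exp F G Q hD ht

end LinftyOp

end

attribute [local instance] Matrix.normedAddCommGroup Matrix.normedSpace

open Matrix NormedSpace

theorem matrix_riccati_explicit_solution_general
    {d m : ℕ}
    (A σB : Matrix (Fin d) (Fin d) ℝ) (C : Matrix (Fin m) (Fin d) ℝ)
    (SigInf : Matrix (Fin d) (Fin d) ℝ)
    (hSigInfSymm : SigInf.IsSymm)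
    (hARE : A * SigInf + SigInf * Aᵀ + σB * σBᵀ - SigInf * Cᵀ * C * SigInf = 0)
    (Sig0 : Matrix (Fin d) (Fin d) ℝ)
    (hSig0diff : IsUnit (Sig0 - SigInf))
    (Finf : Matrix (Fin d) (Fin d) ℝ) (hFinf : Finf = A - SigInf * Cᵀ * C)
    (D : ℝ → Matrix (Fin d) (Fin d) ℝ)
    (hD : ∀ t : ℝ, D t = (Sig0 - SigInf)⁻¹ +
      ∫ s in (0:ℝ)..t, NormedSpace.exp (s • Finfᵀ) * Cᵀ * C * NormedSpace.exp (s • Finf))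
    (hDunit : ∀ t ≥ (0:ℝ), IsUnit (D t))
    (Sig : ℝ → Matrix (Fin d) (Fin d) ℝ)
    (hSig : ∀ t : ℝ, Sig t = SigInf + NormedSpace.exp (t • Finf) * (D t)⁻¹ * NormedSpace.exp (t • Finfᵀ)) :
    Sig 0 = Sig0 ∧
    ∀ t ≥ (0:ℝ), HasDerivAt Sig
      (A * Sig t + Sig t * Aᵀ + σB * σBᵀ - Sig t * Cᵀ * C * Sig t) t := by
  constructor
  · rw [hSig 0, hD 0, intervalIntegral.integral_same, add_zero, zero_smul, zero_smul, exp_zero,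
      Matrix.one_mul, Matrix.mul_one, Matrix.nonsing_inv_nonsing_inv _
        ((Matrix.isUnit_iff_isUnit_det _).mp hSig0diff), add_sub_cancel]
  · intro t ht
    have hFinfT : Finfᵀ = Aᵀ - Cᵀ * C * SigInf := by
      rw [hFinf, Matrix.transpose_sub, Matrix.transpose_mul, Matrix.transpose_mul,
        Matrix.transpose_transpose, hSigInfSymm, Matrix.mul_assoc]
    have hDderiv : HasDerivAt D (exp (t • Finfᵀ) * (Cᵀ * C) * exp (t • Finf)) t := by
      have hcont : Continuous fun s : ℝ => exp (s • Finfᵀ) * (Cᵀ * C) * exp (s • Finf) :=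
        ((Matrix.continuous_exp_smul _).matrix_mul continuous_const).matrix_mul
          (Matrix.continuous_exp_smul _)
      refine (((hcont.integral_hasStrictDerivAt 0 t).hasDerivAt).const_add
        (Sig0 - SigInf)⁻¹).congr_of_eventuallyEq (.of_forall fun s => ?_)
      simp only [hD, Matrix.mul_assoc]
    have hP := Matrix.hasDerivAt_exp_mul_inv_mul_exp Finf Finfᵀ (Cᵀ * C) hDderiv (hDunit t ht)
    refine ((hP.const_add SigInf).congr_of_eventuallyEq (.of_forall hSig)).congr_deriv ?_
    rw [hSig t, Matrix.mul_assoc _ Cᵀ C, riccati_add_of_stationary (by rwa [← Matrix.mul_assoc]),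
      ← Matrix.mul_assoc SigInf, ← hFinf, ← hFinfT]

/-- The explicit formula `Σ_t = Σ_∞ + e^{F_∞ t} D_t^{-1} e^{F_∞^⊤ t}` solves the
matrix Riccati differential equation with initial value `Σ₀`. -/
theorem matrix_riccati_explicit_solution
    {d m : ℕ}
    (A σB : Matrix (Fin d) (Fin d) ℝ) (C : Matrix (Fin m) (Fin d) ℝ)
    (SigInf : Matrix (Fin d) (Fin d) ℝ)
    (hSigInfPD : SigInf.PosDef) (hSigInfSymm : SigInf.IsSymm)
    (hARE : A * SigInf + SigInf * Aᵀ + σB * σBᵀ - SigInf * Cᵀ * C * SigInf = 0)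
    (Sig0 : Matrix (Fin d) (Fin d) ℝ) (hSig0Symm : Sig0.IsSymm)
    (hSig0diff : IsUnit (Sig0 - SigInf))
    (Finf : Matrix (Fin d) (Fin d) ℝ) (hFinf : Finf = A - SigInf * Cᵀ * C)
    (D : ℝ → Matrix (Fin d) (Fin d) ℝ)
    (hD : ∀ t : ℝ, D t = (Sig0 - SigInf)⁻¹ +
      ∫ s in (0:ℝ)..t, NormedSpace.exp (s • Finfᵀ) * Cᵀ * C * NormedSpace.exp (s • Finf))
    (hDunit : ∀ t ≥ (0:ℝ), IsUnit (D t))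
    (Sig : ℝ → Matrix (Fin d) (Fin d) ℝ)
    (hSig : ∀ t : ℝ, Sig t = SigInf + NormedSpace.exp (t • Finf) * (D t)⁻¹ * NormedSpace.exp (t • Finfᵀ)) :
    Sig 0 = Sig0 ∧
    ∀ t ≥ (0:ℝ), HasDerivAt Sig
      (A * Sig t + Sig t * Aᵀ + σB * σBᵀ - Sig t * Cᵀ * C * Sig t) t :=
  matrix_riccati_explicit_solution_general A σB C SigInf hSigInfSymm hARE Sig0 hSig0diff Finf hFinf
    D hD hDunit Sig hSig
end

section
/- Let X_t^i, i = 1,…,N, evolve by the deterministic linear FPF dynamics dX_t^i = A m_t^{(N)} dt + K_t^{(N)}(dZ_t − C m_t^{(N)} dt) + G_t^{(N)}(X_t^i − m_t^{(N)}) dt, where m_t^{(N)} = (1/N)Σ_i X_t^i, Σ_t^{(N)} = (1/(N−1))Σ_i (X_t^i − m_t^{(N)})(X_t^i − m_t^{(N)})^⊤, K_t^{(N)} = Σ_t^{(N)}C^⊤, and G_t^{(N)} = A − (1/2)K_t^{(N)}C + (1/2)σ_Bσ_B^⊤(Σ_t^{(N)})^{-1} + Ω_t(Σ_t^{(N)})^{-1}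 with Ω_t skew-symmetric. Then the empirical mean satisfies dm_t^{(N)} = A m_t^{(N)} dt + K_t^{(N)}(dZ_t − C m_t^{(N)} dt) and the empirical covariance satisfies the Riccati equation dΣ_t^{(N)}/dt = AΣ_t^{(N)} + Σ_t^{(N)}A^⊤ + σ_Bσ_B^⊤ − Σ_t^{(N)}C^⊤CΣ_t^{(N)}. -/
attribute [local instance] Matrix.normedAddCommGroup Matrix.normedSpace

open Matrix

/-!
The deviations `X i - m` sum to zero, so averaging the particle equations kills the term
`G (X i - m)` and leaves the Kalman mean equation. Subtracting it, every deviation solves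
`ė = G e`, hence the empirical covariance solves `Σ̇ = G Σ + Σ Gᵀ`. Substituting `G`, the
term `Ω Σ⁻¹` cancels against its transpose because `Ω` is skew, and the two halves of
`σB σBᵀ Σ⁻¹` add up to `σB σBᵀ`: this is the Riccati right-hand side.
-/

lemma sum_sub_inv_card_smul_sum {𝕜 ι E : Type*} [DivisionRing 𝕜] [CharZero 𝕜] [Fintype ι]
    [Nonempty ι] [AddCommGroup E] [Module 𝕜 E] (x : ι → E) :
    ∑ i, (x i - (Fintype.card ι : 𝕜)⁻¹ • ∑ j, x j) = 0 := by
  have hcard : (Fintype.card ι : 𝕜) ≠ 0 := Nat.cast_ne_zero.mpr Fintype.card_ne_zero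
  rw [Finset.sum_sub_distrib, Finset.sum_const, Finset.card_univ, ← Nat.cast_smul_eq_nsmul 𝕜,
    smul_smul, mul_inv_cancel₀ hcard, one_smul, sub_self]

lemma hasDerivAt_average_of_hasDerivAt_add_map_sub_average {ι E : Type*} [Fintype ι] [Nonempty ι]
    [NormedAddCommGroup E] [NormedSpace ℝ E] {X : ι → ℝ → E} {m : ℝ → E}
    (hm : ∀ s, m s = (Fintype.card ι : ℝ)⁻¹ • ∑ i, X i s) (v : E) (L : E →+ E) {t : ℝ}
    (hX : ∀ i, HasDerivAt (X i) (v + L (X i t - m t)) t) :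
    HasDerivAt m v t := by
  have hcard : (Fintype.card ι : ℝ) ≠ 0 := Nat.cast_ne_zero.mpr Fintype.card_ne_zero
  have hderiv := (HasDerivAt.fun_sum (u := Finset.univ) fun i _ => hX i).const_smul
    (Fintype.card ι : ℝ)⁻¹
  have hdeviation : ∑ i, L (X i t - m t) = 0 := by
    rw [← map_sum, hm, sum_sub_inv_card_smul_sum, map_zero]
  rw [Finset.sum_add_distrib, hdeviation, add_zero, Finset.sum_const, Finset.card_univ,
    ← Nat.cast_smul_eq_nsmul ℝ, smul_smul, inv_mul_cancel₀ hcard, one_smul] at hderiv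
  rw [funext hm]
  exact hderiv

lemma HasDerivAt.vecMulVec {𝕜 m n : Type*} [NontriviallyNormedField 𝕜] [Fintype m] [Fintype n]
    {u : 𝕜 → m → 𝕜} {v : 𝕜 → n → 𝕜} {u' : m → 𝕜} {v' : n → 𝕜} {t : 𝕜}
    (hu : HasDerivAt u u' t) (hv : HasDerivAt v v' t) :
    HasDerivAt (fun s => vecMulVec (u s) (v s)) (vecMulVec u' (v t) + vecMulVec (u t) v') t := by
  change HasDerivAt (fun s i j => u s i * v s j) (fun i j => u' i * v t j + u t i * v' j) t
  refine hasDerivAt_pi.mpr fun i => hasDerivAt_pi.mpr fun j => ?_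
  exact (hasDerivAt_pi.mp hu i).mul (hasDerivAt_pi.mp hv j)

lemma hasDerivAt_smul_sum_vecMulVec_self {𝕜 ι n : Type*} [NontriviallyNormedField 𝕜]
    [Fintype ι] [Fintype n] {e : ι → 𝕜 → n → 𝕜} {S : 𝕜 → Matrix n n 𝕜} {c : 𝕜}
    (hS : ∀ s, S s = c • ∑ i, vecMulVec (e i s) (e i s)) (G : Matrix n n 𝕜) {t : 𝕜}
    (he : ∀ i, HasDerivAt (e i) (G *ᵥ e i t) t) :
    HasDerivAt S (G * S t + S t * Gᵀ) t := by
  have hterm (i : ι) : HasDerivAt (fun s => vecMulVec (e i s) (e i s))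
      (G * vecMulVec (e i t) (e i t) + vecMulVec (e i t) (e i t) * Gᵀ) t := by
    rw [mul_vecMulVec, vecMulVec_mul, vecMul_transpose]
    exact (he i).vecMulVec (he i)
  have hderiv := (HasDerivAt.fun_sum (u := Finset.univ) fun i _ => hterm i).const_smul c
  rw [Finset.sum_add_distrib, ← Matrix.mul_sum, ← Matrix.sum_mul, smul_add, ← Matrix.mul_smul,
    ← Matrix.smul_mul] at hderiv
  rw [funext hS]
  exact hderiv

lemma transpose_smul_sum_vecMulVec_self {ι n R : Type*} [Fintype ι] [CommSemiring R]
    (c : R) (e : ι → n → R) :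
    (c • ∑ i, vecMulVec (e i) (e i))ᵀ = c • ∑ i, vecMulVec (e i) (e i) := by
  simp [transpose_sum]

lemma mul_add_mul_transpose_eq_riccati {K n p : Type*} [Field K] [CharZero K] [Fintype n]
    [DecidableEq n] [Fintype p] (A Q Ω S G : Matrix n n K) (C : Matrix p n K)
    (hQ : Qᵀ = Q) (hΩ : Ωᵀ = -Ω) (hS : Sᵀ = S) (hSunit : IsUnit S)
    (hG : G = A - (1/2 : K) • (S * Cᵀ * C) + (1/2 : K) • (Q * S⁻¹) + Ω * S⁻¹) :
    G * S + S * Gᵀ = A * S + S * Aᵀ + Q - S * Cᵀ * C * S := by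
  have hdet : IsUnit S.det := (isUnit_iff_isUnit_det S).mp hSunit
  have hinv_mul : S⁻¹ * S = 1 := nonsing_inv_mul S hdet
  have hmul_inv : S * S⁻¹ = 1 := mul_nonsing_inv S hdet
  have hmul_inv_mul (M : Matrix n n K) : S * (S⁻¹ * M) = M := by
    rw [← Matrix.mul_assoc, hmul_inv, Matrix.one_mul]
  simp only [hG, transpose_add, transpose_sub, transpose_smul, transpose_mul, transpose_nonsing_inv,
    transpose_transpose, hQ, hΩ, hS, Matrix.add_mul, Matrix.sub_mul, Matrix.mul_add,
    Matrix.mul_sub, Matrix.smul_mul, Matrix.mul_smul, Matrix.mul_neg,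
    Matrix.mul_assoc, hinv_mul, hmul_inv_mul, Matrix.mul_one]
  module

/-- For the finite-`N` deterministic linear FPF (driven by a common observation signal
with formal increment `z t = dZ_t/dt`), the empirical mean satisfies the Kalman filter
mean equation and the empirical covariance satisfies the Riccati equation. -/
theorem deterministic_FPF_mean_covariance_evolution
    {d m N : ℕ} (hN : 2 ≤ N)
    (A σB : Matrix (Fin d) (Fin d) ℝ) (C : Matrix (Fin m) (Fin d) ℝ)
    (z : ℝ → Fin m → ℝ)
    (Om : ℝ → Matrix (Fin d) (Fin d) ℝ) (hOm : ∀ t, (Om t)ᵀ = -(Om t))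
    (X : Fin N → ℝ → Fin d → ℝ)
    (mN : ℝ → Fin d → ℝ)
    (hmN : ∀ t, mN t = (N : ℝ)⁻¹ • ∑ i, X i t)
    (SigN : ℝ → Matrix (Fin d) (Fin d) ℝ)
    (hSigN : ∀ t, SigN t = ((N : ℝ) - 1)⁻¹ •
      ∑ i, vecMulVec (X i t - mN t) (X i t - mN t))
    (hSigNunit : ∀ t, IsUnit (SigN t))
    (KN : ℝ → Matrix (Fin d) (Fin m) ℝ) (hKN : ∀ t, KN t = SigN t * Cᵀ)
    (GN : ℝ → Matrix (Fin d) (Fin d) ℝ)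
    (hGN : ∀ t, GN t = A - (1/2 : ℝ) • (KN t * C) + (1/2 : ℝ) • (σB * σBᵀ * (SigN t)⁻¹)
      + Om t * (SigN t)⁻¹)
    (hdyn : ∀ i, ∀ t : ℝ, HasDerivAt (X i)
      (A.mulVec (mN t) + (KN t).mulVec (z t - C.mulVec (mN t))
        + (GN t).mulVec (X i t - mN t)) t) :
    (∀ t : ℝ, HasDerivAt mN
      (A.mulVec (mN t) + (KN t).mulVec (z t - C.mulVec (mN t))) t) ∧
    (∀ t : ℝ, HasDerivAt SigN
      (A * SigN t + SigN t * Aᵀ + σB * σBᵀ - SigN t * Cᵀ * C * SigN t) t) := by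
  have : NeZero N := ⟨by omega⟩
  have hmean (t : ℝ) : HasDerivAt mN
      (A *ᵥ mN t + KN t *ᵥ (z t - C *ᵥ mN t)) t :=
    hasDerivAt_average_of_hasDerivAt_add_map_sub_average (by simpa using hmN) _
      (GN t).mulVecLin.toAddMonoidHom (fun i => hdyn i t)
  refine ⟨hmean, fun t => ?_⟩
  have hdeviation (i : Fin N) :
      HasDerivAt (fun s => X i s - mN s) (GN t *ᵥ (X i t - mN t)) t := by
    have h := (hdyn i t).sub (hmean t)
    rwa [add_sub_cancel_left] at h
  have hsymm : (SigN t)ᵀ = SigN t := by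
    rw [hSigN]
    exact transpose_smul_sum_vecMulVec_self _ _
  rw [← mul_add_mul_transpose_eq_riccati A (σB * σBᵀ) (Om t) (SigN t) (GN t) C
    (by rw [transpose_mul, transpose_transpose]) (hOm t) hsymm (hSigNunit t)
    (by rw [hGN, hKN])]
  exact hasDerivAt_smul_sum_vecMulVec_self hSigN (GN t) hdeviation
end
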